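/- Let R be a commutative ℝ-algebra, let L : R → R be an ℝ-linear map, let T : R → R be an ℝ-linear derivation (T(ab) = T(a)b + aT(b)), let q ∈ R, and let n be a fixed real number. Assume: (i) for every integer ℓ ≥ 1 and every m ∈ R, L^ℓ(q·m) − q·L^ℓ(m) = 2ℓ·L^{ℓ−1}(2T(m) + (n+4−2ℓ)m); (ii) T∘L = L∘T − 2L. Let k ∈ ℕ and w, w′ ∈ ℝ, and define a_j := C(k,j)·Γ(j+k−w−w′−n/2)·Γ(n/2+w−j)/(Γ(k−w−w′−n/2)·Γ(n/2+w−k)) for 0 ≤ j ≤ k, where Γ is the real Gamma function. Assume for every j with 0 ≤ j < k that (k−w−w′−n/2)+j ≠ 0 and n/2+w−j−1 ≠ 0. Then for every f ∈ R with T(f) = w′·f and every u ∈ R with T(u) = (w−2)·u, one has Σ_{j=0}^{k} a_j·L^{k−j}(f·L^{j}(q·u)) = q·Σ_{j=0}^{k} a_j·L^{k−j}(f·L^{j}(u)). -/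

import Mathlib

/-!
Expanding `L^{k-j}(f · L^j(q u))` with the commutator identity (i) twice — once for `L^j` acting
on `u`, once for `L^{k-j}` acting on `f · L^j u` — leaves `q` times the desired summand plus two
error terms. Identity (i) has this closed form on eigenvectors of `T`, and by (ii) and the
Leibniz rule `L^j u` and `f · L^j u` are again eigenvectors of `T`. After shifting the index,
the error terms of the `j`-th and `(j+1)`-st summands are multiples of the same element, and the
Gamma coefficients `a_j` are exactly the solution of the two-term recurrence making these
multiples cancel.
-/

open Finset

section Eigenvectors

variable {K : Type*} [CommRing K]

theorem apply_pow_apply_eq_smul_of_comp_eq {M : Type*} [AddCommGroup M] [Module K M]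
    {L T : M →ₗ[K] M} {μ c : K} {v : M} (hTL : T ∘ₗ L = L ∘ₗ T - μ • L) (hv : T v = c • v)
    (j : ℕ) : T ((L ^ j) v) = (c - j * μ) • (L ^ j) v := by
  induction j with
  | zero => simpa using hv
  | succ j ih =>
    have hTLx : T (L ((L ^ j) v)) = L (T ((L ^ j) v)) - μ • L ((L ^ j) v) := by
      simpa using LinearMap.congr_fun hTL ((L ^ j) v)
    rw [pow_succ', Module.End.mul_apply, hTLx, ih, map_smul, ← sub_smul]
    push_cast
    ring_nf

theorem apply_mul_eq_smul_of_leibniz {R : Type*} [Semiring R] [Algebra K R] {T : R →ₗ[K] R}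
    (hT : ∀ a b : R, T (a * b) = T a * b + a * T b) {c d : K} {f g : R}
    (hf : T f = c • f) (hg : T g = d • g) : T (f * g) = (c + d) • (f * g) := by
  rw [hT, hf, hg, smul_mul_assoc, mul_smul_comm, ← add_smul]

end Eigenvectors

section Commutator

variable {K R : Type*} [CommRing K] [CommRing R] [Algebra K R]

def commCoeff (n c : K) (ℓ : ℕ) : K :=
  2 * ℓ * (2 * c + n + 4 - 2 * ℓ)

theorem pow_apply_mul_of_eigen {L T : R →ₗ[K] R} {q : R} {n : K}
    (hi : ∀ ℓ : ℕ, 1 ≤ ℓ → ∀ m : R,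
      (L ^ ℓ) (q * m) - q * (L ^ ℓ) m =
        (2 * (ℓ : K)) • (L ^ (ℓ - 1)) ((2 : K) • T m + (n + 4 - 2 * (ℓ : K)) • m))
    {c : K} {v : R} (hv : T v = c • v) (ℓ : ℕ) :
    (L ^ ℓ) (q * v) = q * (L ^ ℓ) v + commCoeff n c ℓ • (L ^ (ℓ - 1)) v := by
  rcases Nat.eq_zero_or_pos ℓ with rfl | hℓ
  · simp [commCoeff]
  · rw [← sub_eq_iff_eq_add', hi ℓ hℓ v, hv, smul_smul, ← add_smul, map_smul, smul_smul,
      commCoeff]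
    ring_nf

end Commutator

section GammaCoefficients

open Real

noncomputable def gammaCoeff (k : ℕ) (A B : ℝ) (j : ℕ) : ℝ :=
  k.choose j * (Gamma (A + j) * Gamma (B - j))

theorem gammaCoeff_recurrence (k : ℕ) {j : ℕ} {A B : ℝ} (hA : A + j ≠ 0)
    (hB : B - j - 1 ≠ 0) :
    ((k - j : ℕ) : ℝ) * (A + j) * gammaCoeff k A B j
      = (j + 1) * (B - j - 1) * gammaCoeff k A B (j + 1) := by
  have hchoose : ((k.choose (j + 1) : ℕ) : ℝ) * (j + 1) = k.choose j * ((k - j : ℕ) : ℝ) := by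
    exact_mod_cast Nat.choose_succ_right_eq k j
  have hGammaA : Gamma (A + (j + 1 : ℕ)) = (A + j) * Gamma (A + j) := by
    rw [Nat.cast_succ, ← add_assoc, Gamma_add_one hA]
  have hGammaB : Gamma (B - j) = (B - j - 1) * Gamma (B - j - 1) := by
    rw [← Gamma_add_one hB, sub_add_cancel]
  have hB' : B - ((j + 1 : ℕ) : ℝ) = B - j - 1 := by push_cast; ring
  rw [gammaCoeff, gammaCoeff, hGammaA, hGammaB, hB']
  linear_combination -(A + j) * (B - j - 1) * Gamma (A + j) * Gamma (B - j - 1) * hchoose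

end GammaCoefficients

theorem sum_range_smul_add_smul_shift_eq_zero {K M : Type*} [Semiring K] [AddCommMonoid M]
    [Module K M] {k : ℕ} {α β : ℕ → K} {X Y : ℕ → M} (hY : ∀ j, Y (j + 1) = X j)
    (hα : α k = 0) (hβ : β 0 = 0) (hαβ : ∀ j < k, α j + β (j + 1) = 0) :
    ∑ j ∈ range (k + 1), (α j • X j + β j • Y j) = 0 := by
  rw [sum_add_distrib, sum_range_succ, hα, zero_smul, add_zero, sum_range_succ', hβ, zero_smul,
    add_zero, ← sum_add_distrib]
  refine sum_eq_zero fun j hj => ?_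
  rw [hY, ← add_smul, hαβ j (mem_range.mp hj), zero_smul]

/-- The algebraic content of the construction lemma (Lemma 2.3): the operator
`Σ a_j L^{k-j}(f · L^j ·)` with Gamma-function coefficients commutes with
multiplication by `q` on elements of weight `w - 2`. -/
theorem construction_lemma {R : Type*} [CommRing R] [Algebra ℝ R]
    (L T : R →ₗ[ℝ] R) (q : R) (n : ℝ)
    (hT : ∀ a b : R, T (a * b) = T a * b + a * T b)
    (hi : ∀ ℓ : ℕ, 1 ≤ ℓ → ∀ m : R,
      (L ^ ℓ) (q * m) - q * (L ^ ℓ) m =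
        (2 * (ℓ : ℝ)) • (L ^ (ℓ - 1)) ((2 : ℝ) • T m + (n + 4 - 2 * (ℓ : ℝ)) • m))
    (hii : T ∘ₗ L = L ∘ₗ T - (2 : ℝ) • L)
    (k : ℕ) (w w' : ℝ)
    (a : ℕ → ℝ)
    (ha : ∀ j : ℕ, j ≤ k → a j =
      (Nat.choose k j : ℝ) *
        (Real.Gamma ((j : ℝ) + (k : ℝ) - w - w' - n / 2) * Real.Gamma (n / 2 + w - (j : ℝ)))
        / (Real.Gamma ((k : ℝ) - w - w' - n / 2) * Real.Gamma (n / 2 + w - (k : ℝ))))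
    (hnz : ∀ j : ℕ, j < k →
      ((k : ℝ) - w - w' - n / 2) + (j : ℝ) ≠ 0 ∧ n / 2 + w - (j : ℝ) - 1 ≠ 0)
    (f : R) (hf : T f = w' • f) (u : R) (hu : T u = (w - 2) • u) :
    ∑ j ∈ Finset.range (k + 1), a j • (L ^ (k - j)) (f * (L ^ j) (q * u))
      = q * ∑ j ∈ Finset.range (k + 1), a j • (L ^ (k - j)) (f * (L ^ j) u) := by
  set D := Real.Gamma ((k : ℝ) - w - w' - n / 2) * Real.Gamma (n / 2 + w - (k : ℝ))
  have ha' : ∀ j ≤ k, a j = gammaCoeff k ((k : ℝ) - w - w' - n / 2) (n / 2 + w) j / D := by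
    intro j hj
    rw [ha j hj, gammaCoeff]
    congr 4
    ring
  have hfLu (j : ℕ) : T (f * (L ^ j) u) = (w' + (w - 2 - j * 2)) • (f * (L ^ j) u) :=
    apply_mul_eq_smul_of_leibniz hT hf (apply_pow_apply_eq_smul_of_comp_eq hii hu j)
  have hexpand (j : ℕ) : a j • (L ^ (k - j)) (f * (L ^ j) (q * u))
      - q * (a j • (L ^ (k - j)) (f * (L ^ j) u))
      = (a j * commCoeff n (w' + (w - 2 - j * 2)) (k - j)) • (L ^ (k - j - 1)) (f * (L ^ j) u)
        + (a j * commCoeff n (w - 2) j) • (L ^ (k - j)) (f * (L ^ (j - 1)) u) := by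
    rw [pow_apply_mul_of_eigen hi hu, mul_add, mul_smul_comm, mul_left_comm f q, map_add,
      map_smul, pow_apply_mul_of_eigen hi (hfLu j), mul_smul_comm]
    module
  have hcancel : ∀ j < k, a j * commCoeff n (w' + (w - 2 - j * 2)) (k - j)
      + a (j + 1) * commCoeff n (w - 2) (j + 1) = 0 := by
    intro j hj
    obtain ⟨hA, hB⟩ := hnz j hj
    have hrec := gammaCoeff_recurrence k hA hB
    rw [ha' j hj.le, ha' (j + 1) hj, commCoeff, commCoeff]
    push_cast [Nat.cast_sub hj.le] at hrec ⊢
    linear_combination (-4 / D) * hrec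
  rw [← sub_eq_zero, mul_sum, ← sum_sub_distrib]
  simp only [hexpand]
  refine sum_range_smul_add_smul_shift_eq_zero (fun j => ?_) (by simp [commCoeff])
    (by simp [commCoeff]) hcancel
  simp only [Nat.sub_sub, Nat.add_sub_cancel]
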